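/- arXiv:2303.09613 — 2 statements merged into one kernel-verified Lean document; each statement's English description precedes it below -/
import Mathlib

section
/- Let f : ℝ → ℝ be differentiable, let y : ℝ → ℝ satisfy y'(t) = f(y(t)), and let μ : ℝ → ℝ be differentiable at a point x ≠ x₀. Suppose the identity y(t) = y(x₀) + f(μ(t))·(t − x₀) holds for all t in some open neighborhood of x, and that f'(μ(x)) ≠ 0. Then μ'(x) = (f(y(x)) − f(μ(x))) / (f'(μ(x))·(x − x₀)), and, substituting the identity for y(x), μ'(x) = (f(y(x₀) + f(μ(x))·(x − x₀)) − f(μ(x))) / (f'(μ(x))·(x − x₀)). -/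
open Topology

theorem HasDerivAt.eq_mul_sub_add_of_eventuallyEq {𝕜 : Type*} [NontriviallyNormedField 𝕜]
    {y g : 𝕜 → 𝕜} {a c v g' x : 𝕜} (hy : HasDerivAt y v x) (hg : HasDerivAt g g' x)
    (hid : ∀ᶠ t in 𝓝 x, y t = c + g t * (t - a)) :
    v = g' * (x - a) + g x := by
  have hrhs : HasDerivAt (fun t => c + g t * (t - a)) (g' * (x - a) + g x * 1) x :=
    (hg.mul ((hasDerivAt_id x).sub_const a)).const_add c
  simpa using hy.unique (hrhs.congr_of_eventuallyEq hid)

/-- Differentiating the Taylor–Lagrange remainder identity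
`y t = y x₀ + f (μ t) * (t - x₀)` yields the ODE
`μ' = (f(y) - f(μ)) / (f'(μ)(x - x₀))` for the Taylor–Lagrange function `μ`,
and substituting the identity for `y x` gives
`μ' = (f(y₀ + f(μ)(x - x₀)) - f(μ)) / (f'(μ)(x - x₀))`. -/
theorem taylor_lagrange_function_ode
    (f y μ : ℝ → ℝ) (x₀ x : ℝ)
    (hf : Differentiable ℝ f)
    (hy : ∀ t, HasDerivAt y (f (y t)) t)
    (hμ : DifferentiableAt ℝ μ x)
    (hxne : x ≠ x₀)
    (hid : ∀ᶠ t in nhds x, y t = y x₀ + f (μ t) * (t - x₀))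
    (hfy : deriv f (μ x) ≠ 0) :
    deriv μ x = (f (y x) - f (μ x)) / (deriv f (μ x) * (x - x₀)) ∧
    deriv μ x =
      (f (y x₀ + f (μ x) * (x - x₀)) - f (μ x)) / (deriv f (μ x) * (x - x₀)) := by
  have hchain : HasDerivAt (fun t => f (μ t)) (deriv f (μ x) * deriv μ x) x :=
    (hf (μ x)).hasDerivAt.comp x hμ.hasDerivAt
  have hfyx : f (y x) = deriv f (μ x) * deriv μ x * (x - x₀) + f (μ x) :=
    (hy x).eq_mul_sub_add_of_eventuallyEq hchain hid
  have hode : deriv μ x = (f (y x) - f (μ x)) / (deriv f (μ x) * (x - x₀)) := by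
    rw [eq_div_iff (mul_ne_zero hfy (sub_ne_zero.mpr hxne)), hfyx]
    ring
  exact ⟨hode, by rwa [← hid.self_of_nhds]⟩
end

section
/- Let f : ℝ → ℝ be continuously differentiable with f'(u) > 0 for all u ∈ ℝ, and let y : ℝ → ℝ be differentiable on [x₀, X] with y'(t) = f(y(t)) for all t ∈ [x₀, X] and y(x₀) = y₀. Then for every x ∈ (x₀, X] the difference quotient (y(x) − y₀)/(x − x₀) lies in the range of f, so that μ(x) := f⁻¹((y(x) − y₀)/(x − x₀)) is well defined; the function μ so defined satisfies y(x) = y₀ + f(μ(x))·(x − x₀) for all x ∈ (x₀, X], and μ is differentiable on the open interval (x₀, X). -/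
/-! By the mean value theorem the difference quotient `(y x - y₀)/(x - x₀)` equals
`y' c = f (y c)` for some `c ∈ (x₀, x)`, so it lies in the range of `f`, and the remainder identity
is just `f ∘ invFun f = id` there. Since `f' > 0`, `f` is injective and the inverse function
theorem makes `invFun f` differentiable on the range of `f`; composing with the (differentiable)
difference quotient gives differentiability of `μ` on `(x₀, X)`. -/

open Set Function

theorem Function.Injective.hasDerivAt_invFun {𝕜 : Type*} [NontriviallyNormedField 𝕜]
    [CompleteSpace 𝕜] {f : 𝕜 → 𝕜} {f' a : 𝕜} (hinj : Injective f)
    (hf : HasStrictDerivAt f f' a) (hf' : f' ≠ 0) :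
    HasDerivAt (invFun f) f'⁻¹ (f a) := by
  have hinv : invFun f =ᶠ[nhds (f a)] hf.localInverse f _ a hf' := by
    filter_upwards [hf.eventually_right_inverse hf'] with z hz
    exact hinj ((invFun_eq ⟨_, hz⟩).trans hz.symm)
  exact (hf.to_localInverse hf').hasDerivAt.congr_of_eventuallyEq hinv

theorem slope_mem_image_Ioo_of_hasDerivAt {y y' : ℝ → ℝ} {a b : ℝ} (hab : a < b)
    (hy : ∀ t ∈ Icc a b, HasDerivAt y (y' t) t) :
    (y b - y a) / (b - a) ∈ y' '' Ioo a b :=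
  exists_hasDerivAt_eq_slope y y' hab (fun t ht => (hy t ht).continuousAt.continuousWithinAt)
    fun t ht => hy t (Ioo_subset_Icc_self ht)

theorem taylor_lagrange_function_wellDefined_general
    (f y : ℝ → ℝ) (x₀ X y₀ : ℝ)
    (hf : ContDiff ℝ 1 f)
    (hf' : ∀ u : ℝ, 0 < deriv f u)
    (hy : ∀ t ∈ Set.Icc x₀ X, HasDerivAt y (f (y t)) t)
    (hy₀ : y x₀ = y₀) :
    (∀ x ∈ Set.Ioc x₀ X, (y x - y₀) / (x - x₀) ∈ Set.range f) ∧
    (∀ x ∈ Set.Ioc x₀ X,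
      y x = y₀ + f (Function.invFun f ((y x - y₀) / (x - x₀))) * (x - x₀)) ∧
    DifferentiableOn ℝ (fun x => Function.invFun f ((y x - y₀) / (x - x₀)))
      (Set.Ioo x₀ X) := by
  have hrange : ∀ x ∈ Ioc x₀ X, (y x - y₀) / (x - x₀) ∈ range f := by
    rintro x ⟨hx₀, hxX⟩
    obtain ⟨c, -, hc⟩ := slope_mem_image_Ioo_of_hasDerivAt hx₀
      fun t ht => hy t (Icc_subset_Icc_right hxX ht)
    exact ⟨y c, hy₀ ▸ hc⟩
  have hinv : ∀ q ∈ range f, DifferentiableAt ℝ (invFun f) q := by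
    rintro _ ⟨a, rfl⟩
    exact ((strictMono_of_deriv_pos hf').injective.hasDerivAt_invFun
      (hf.contDiffAt.hasStrictDerivAt one_ne_zero) (hf' a).ne').differentiableAt
  refine ⟨hrange, fun x hx => ?_, fun x hx => ?_⟩
  · rw [invFun_eq (hrange x hx), div_mul_cancel₀ _ (sub_ne_zero.mpr hx.1.ne'),
      add_sub_cancel]
  · have hquot : DifferentiableAt ℝ (fun x => (y x - y₀) / (x - x₀)) x :=
      ((hy x (Ioo_subset_Icc_self hx)).differentiableAt.sub_const y₀).div
        (differentiableAt_id.sub_const x₀) (sub_ne_zero.mpr hx.1.ne')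
    exact ((hinv _ (hrange x (Ioo_subset_Ioc_self hx))).comp x hquot).differentiableWithinAt

/-- When `f` is continuously differentiable with `f' > 0` everywhere and `y`
solves `y' = f(y)`, `y x₀ = y₀` on `[x₀, X]`, the difference quotient
`(y x - y₀)/(x - x₀)` lies in the range of `f` for every `x ∈ (x₀, X]`, so the
Taylor–Lagrange function `μ x = f⁻¹((y x - y₀)/(x - x₀))` is well defined; it
satisfies `y x = y₀ + f (μ x) * (x - x₀)` on `(x₀, X]` and is differentiable on
`(x₀, X)`. -/
theorem taylor_lagrange_function_wellDefined
    (f y : ℝ → ℝ) (x₀ X y₀ : ℝ)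
    (hf : ContDiff ℝ 1 f)
    (hf' : ∀ u : ℝ, 0 < deriv f u)
    (hX : x₀ < X)
    (hy : ∀ t ∈ Set.Icc x₀ X, HasDerivAt y (f (y t)) t)
    (hy₀ : y x₀ = y₀) :
    (∀ x ∈ Set.Ioc x₀ X, (y x - y₀) / (x - x₀) ∈ Set.range f) ∧
    (∀ x ∈ Set.Ioc x₀ X,
      y x = y₀ + f (Function.invFun f ((y x - y₀) / (x - x₀))) * (x - x₀)) ∧
    DifferentiableOn ℝ (fun x => Function.invFun f ((y x - y₀) / (x - x₀)))
      (Set.Ioo x₀ X) :=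
  taylor_lagrange_function_wellDefined_general f y x₀ X y₀ hf hf' hy hy₀
end
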